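/- For every integer 0 ≤ r ≤ (1−1/q̂_a)·n, the Hamming ball B_r(0) = {x ∈ Q : wt(x) ≤ r} satisfies (1/(n+1))·q̂_mg^{n·H_{q̂_mg}(r/n)} ≤ |B_r(0)| ≤ q̂_a^{n·H_{q̂_a}(r/n)}. -/

import Mathlib

open Finset

/-!
Write `ρ = r / n`; then `q^{n H_q(ρ)} = (q - 1)^r / (ρ^r (1 - ρ)^(n - r))`.

Upper bound: for `0 ≤ t ≤ 1`, `|B_r| t^r ≤ ∑ₓ t^{wt x} = ∏ (1 + (q_i - 1) t) ≤ (1 + (q̂_a - 1) t)^n`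
by AM-GM. The choice `t = ρ / ((1 - ρ)(q̂_a - 1))` minimises the resulting bound, turns it into
`q̂_a^{n H(ρ)}`, and satisfies `t ≤ 1` exactly when `r ≤ (1 - 1/q̂_a) n`.

Lower bound: `|B_r| ≥ |S_r| = ∑_{|S| = r} ∏_{i ∈ S} (q_i - 1)`. Every coordinate lies in the same
number of `r`-subsets, so AM-GM over the subsets bounds this sum below by
`C(n, r) (∏ (q_i - 1))^{r/n} = C(n, r) (q̂_mg - 1)^r`; and `C(n, r) ρ^r (1 - ρ)^(n - r) ≥ 1/(n + 1)`
since it is the largest of the `n + 1` terms of the binomial expansion of `(ρ + (1 - ρ))^n = 1`.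
-/

/-- The Hamming weight of `x ∈ Q = ∏ i, ℤ/q_iℤ`: the number of coordinates `i`
with `x i ≠ 0`. -/
def mwt {n : ℕ} {q : Fin n → ℕ} (x : ∀ i, ZMod (q i)) : ℕ :=
  (Finset.univ.filter (fun i => x i ≠ 0)).card

/-- `sph q r` is `s_r`, the number of `x ∈ Q` with `wt(x) = r`. -/
noncomputable def sph {n : ℕ} (q : Fin n → ℕ) (r : ℕ) : ℕ :=
  Nat.card {x : ∀ i, ZMod (q i) // mwt x = r}

/-- The arithmetic mean `q̂_a = (1/n) ∑ q_i` of the alphabet sizes. -/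
noncomputable def qa {n : ℕ} (q : Fin n → ℕ) : ℝ :=
  (∑ i : Fin n, (q i : ℝ)) / n

/-- `q̂_mg = (∏ (q_i - 1))^{1/n} + 1`. -/
noncomputable def qmg {n : ℕ} (q : Fin n → ℕ) : ℝ :=
  (∏ i : Fin n, ((q i : ℝ) - 1)) ^ ((n : ℝ)⁻¹) + 1

/-- The `q`-ary entropy function `H_q(x)`; since `Real.logb q 0 = 0` and
`0 * logb q 0 = 0`, this formula also yields `H_q(0) = 0`. -/
noncomputable def entH (qv x : ℝ) : ℝ :=
  x * Real.logb qv (qv - 1) - x * Real.logb qv x - (1 - x) * Real.logb qv (1 - x)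

theorem Real.prod_rpow_inv_card_le_mean {ι : Type*} (s : Finset ι) {z : ι → ℝ}
    (hz : ∀ i ∈ s, 0 ≤ z i) (hs : s.Nonempty) :
    (∏ i ∈ s, z i) ^ (#s : ℝ)⁻¹ ≤ (∑ i ∈ s, z i) / #s := by
  simpa using Real.geom_mean_le_arith_mean s (fun _ ↦ 1) z (fun _ _ ↦ zero_le_one)
    (by simpa using hs) hz

theorem Real.prod_le_mean_pow {ι : Type*} (s : Finset ι) {z : ι → ℝ}
    (hz : ∀ i ∈ s, 0 ≤ z i) : ∏ i ∈ s, z i ≤ ((∑ i ∈ s, z i) / #s) ^ #s := by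
  rcases s.eq_empty_or_nonempty with rfl | hs
  · simp
  have hP : 0 ≤ ∏ i ∈ s, z i := prod_nonneg hz
  calc ∏ i ∈ s, z i = ((∏ i ∈ s, z i) ^ (#s : ℝ)⁻¹) ^ #s := by
        rw [← Real.rpow_mul_natCast hP, inv_mul_cancel₀ (by simpa using hs.card_ne_zero),
          Real.rpow_one]
    _ ≤ _ := pow_le_pow_left₀ (by positivity) (Real.prod_rpow_inv_card_le_mean s hz hs) _

theorem Finset.prod_powersetCard_prod {α M : Type*} [CommMonoid M] [DecidableEq α]
    (s : Finset α) {r : ℕ} (hr : r ≠ 0) (a : α → M) :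
    ∏ S ∈ s.powersetCard r, ∏ i ∈ S, a i
      = (∏ i ∈ s, a i) ^ (#s - 1).choose (r - 1) := by
  rw [prod_comm' (t' := s) (s' := fun i ↦ {S ∈ s.powersetCard r | {i} ⊆ S})]
  · rw [← prod_pow]
    refine prod_congr rfl fun i hi ↦ ?_
    rw [prod_const, card_filter_powersetCard_subset _ _ _ (by simpa using hi)
      (by simpa using Nat.one_le_iff_ne_zero.2 hr), card_singleton]
  · intro S i
    simp only [mem_powersetCard, mem_filter, singleton_subset_iff]
    exact ⟨fun ⟨⟨hS, hcard⟩, hi⟩ ↦ ⟨⟨⟨hS, hcard⟩, hi⟩, hS hi⟩,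
      fun ⟨⟨⟨hS, h⟩, hi⟩, _⟩ ↦ ⟨⟨hS, h⟩, hi⟩⟩

theorem Real.choose_mul_prod_rpow_le_sum_powersetCard_prod {α : Type*} [DecidableEq α]
    (s : Finset α) {r : ℕ} (hr : r ≤ #s) {a : α → ℝ} (ha : ∀ i ∈ s, 0 ≤ a i) :
    (#s).choose r * (∏ i ∈ s, a i) ^ ((r : ℝ) / #s)
      ≤ ∑ S ∈ s.powersetCard r, ∏ i ∈ S, a i := by
  rcases Nat.eq_zero_or_pos r with rfl | hr₀
  · simp
  have hC : (0 : ℝ) < (#s).choose r := by exact_mod_cast Nat.choose_pos hr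
  have hn : (0 : ℝ) < #s := by exact_mod_cast hr₀.trans_le hr
  have hexp : ((#s - 1).choose (r - 1) : ℝ) * ((#s).choose r : ℝ)⁻¹ = r / #s := by
    have h := Nat.add_one_mul_choose_eq (#s - 1) (r - 1)
    rw [Nat.sub_add_cancel (by omega), Nat.sub_add_cancel hr₀] at h
    have h' : (#s : ℝ) * (#s - 1).choose (r - 1) = (#s).choose r * r := by exact_mod_cast h
    field_simp
    linarith
  have hamgm := Real.prod_rpow_inv_card_le_mean (s.powersetCard r)
    (fun S hS ↦ prod_nonneg fun i hi ↦ ha i ((mem_powersetCard.1 hS).1 hi))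
    (powersetCard_nonempty.2 hr)
  rw [card_powersetCard, prod_powersetCard_prod s hr₀.ne', ← Real.rpow_natCast,
    ← Real.rpow_mul (prod_nonneg ha), hexp, le_div_iff₀ hC] at hamgm
  linarith

section Hamming

variable {ι : Type*} [Fintype ι] [DecidableEq ι] {β : ι → Type*} [∀ i, Fintype (β i)]
  [∀ i, DecidableEq (β i)] [∀ i, Zero (β i)]

theorem sum_pow_hammingNorm {R : Type*} [CommRing R] (t : R) :
    ∑ x : ∀ i, β i, t ^ hammingNorm x = ∏ i, (1 + ((Fintype.card (β i) : R) - 1) * t) := by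
  have hcoord : ∀ i, ∑ y : β i, (if y = 0 then 1 else t)
      = 1 + ((Fintype.card (β i) : R) - 1) * t := by
    intro i
    rw [sum_ite, filter_eq', filter_ne', sum_const, sum_const, card_erase_of_mem (mem_univ _)]
    simp [nsmul_eq_mul, Nat.cast_sub Fintype.card_pos]
  simp_rw [← hcoord, prod_univ_sum, Fintype.piFinset_univ, prod_ite, prod_const_one,
    prod_const, one_mul, hammingNorm]

theorem card_hammingNorm_le_mul_pow_le (r : ℕ) {t : ℝ} (ht₀ : 0 ≤ t) (ht₁ : t ≤ 1) :
    (#{x : ∀ i, β i | hammingNorm x ≤ r} : ℝ) * t ^ r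
      ≤ ∏ i, (1 + ((Fintype.card (β i) : ℝ) - 1) * t) := by
  rw [← sum_pow_hammingNorm, ← nsmul_eq_mul, ← sum_const]
  calc ∑ x ∈ {x : ∀ i, β i | hammingNorm x ≤ r}, t ^ r
      ≤ ∑ x ∈ {x : ∀ i, β i | hammingNorm x ≤ r}, t ^ hammingNorm x :=
        sum_le_sum fun x hx ↦ pow_le_pow_of_le_one ht₀ ht₁ (mem_filter.1 hx).2
    _ ≤ ∑ x, t ^ hammingNorm x :=
        sum_le_sum_of_subset_of_nonneg (filter_subset _ _) fun _ _ _ ↦ by positivity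

theorem card_filter_support_eq (S : Finset ι) :
    #{x : ∀ i, β i | ({i | x i ≠ 0} : Finset ι) = S}
      = ∏ i ∈ S, (Fintype.card (β i) - 1) := by
  have hpi : ({x : ∀ i, β i | ({i | x i ≠ 0} : Finset ι) = S} : Finset _)
      = Fintype.piFinset fun i ↦ if i ∈ S then univ.erase 0 else {0} := by
    ext x
    simp only [Finset.ext_iff, mem_filter, mem_univ, true_and, Fintype.mem_piFinset]
    refine forall_congr' fun i ↦ ?_
    split_ifs with hi <;> simp [hi]
  rw [hpi, Fintype.card_piFinset]
  calc ∏ i, #(if i ∈ S then univ.erase (0 : β i) else {0})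
      = ∏ i, if i ∈ S then Fintype.card (β i) - 1 else 1 :=
        prod_congr rfl fun i _ ↦ by split_ifs <;> simp [card_erase_of_mem]
    _ = ∏ i ∈ S, (Fintype.card (β i) - 1) := by rw [prod_ite_mem, univ_inter]

theorem card_hammingNorm_eq (r : ℕ) :
    #{x : ∀ i, β i | hammingNorm x = r}
      = ∑ S ∈ powersetCard r univ, ∏ i ∈ S, (Fintype.card (β i) - 1) := by
  rw [card_eq_sum_card_fiberwise (f := fun x : ∀ i, β i ↦ ({i | x i ≠ 0} : Finset ι))
    (t := powersetCard r univ) fun x hx ↦ by simpa [hammingNorm] using hx]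
  refine sum_congr rfl fun S hS ↦ ?_
  rw [← card_filter_support_eq, filter_filter]
  congr 1
  refine filter_congr fun x _ ↦ and_iff_right_of_imp fun hx ↦ ?_
  rw [hammingNorm, hx, (mem_powersetCard.1 hS).2]

end Hamming

namespace Nat

-- The ratio of consecutive terms of the binomial expansion of `(r + (n - r)) ^ n`,
-- cleared of denominators.
theorem choose_succ_mul_mul_pow_mul_pow (n r k : ℕ) :
    n.choose (k + 1) * (r ^ (k + 1) * (n - r) ^ (n - (k + 1))) * ((k + 1) * (n - r))
      = n.choose k * (r ^ k * (n - r) ^ (n - k)) * ((n - k) * r) := by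
  rcases lt_or_ge k n with hk | hk
  · have hm : n - (k + 1) + 1 = n - k := by omega
    calc _ = n.choose (k + 1) * (k + 1) * (r ^ (k + 1) * ((n - r) ^ (n - (k + 1)) * (n - r))) := by
          ring
      _ = n.choose k * (n - k) * (r ^ (k + 1) * (n - r) ^ (n - k)) := by
          rw [choose_succ_right_eq, ← pow_succ, hm]
      _ = _ := by ring
  · simp [choose_eq_zero_of_lt (show n < k + 1 by omega), Nat.sub_eq_zero_of_le hk]

theorem choose_mul_pow_mul_pow_le {n r : ℕ} (hr : r ≤ n) (k : ℕ) :
    n.choose k * (r ^ k * (n - r) ^ (n - k)) ≤ n.choose r * (r ^ r * (n - r) ^ (n - r)) := by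
  have hstep := choose_succ_mul_mul_pow_mul_pow n r
  rcases le_total k r with hk | hk
  · refine Nat.decreasingInduction (motive := fun j _ ↦ n.choose j * (r ^ j * (n - r) ^ (n - j))
      ≤ n.choose r * (r ^ r * (n - r) ^ (n - r))) (fun j hj ih ↦ le_trans ?_ ih) le_rfl hk
    refine Nat.le_of_mul_le_mul_right (c := (n - j) * r) ?_ (Nat.mul_pos (by omega) (by omega))
    rw [← hstep]
    exact Nat.mul_le_mul_left _ (Nat.mul_le_mul (by omega) (by omega) |>.trans_eq (mul_comm _ _))
  · induction k, hk using Nat.le_induction with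
    | base => exact le_rfl
    | succ j hj ih =>
      refine le_trans ?_ ih
      rcases lt_or_ge r n with hrn | hrn
      · refine Nat.le_of_mul_le_mul_right (c := (j + 1) * (n - r)) ?_
          (Nat.mul_pos (by omega) (by omega))
        rw [hstep]
        exact Nat.mul_le_mul_left _
          (Nat.mul_le_mul (by omega) (by omega) |>.trans_eq (mul_comm _ _))
      · simp [choose_eq_zero_of_lt (show n < j + 1 by omega)]

theorem pow_le_succ_mul_choose_mul_pow_mul_pow {n r : ℕ} (hr : r ≤ n) :
    n ^ n ≤ (n + 1) * (n.choose r * (r ^ r * (n - r) ^ (n - r))) := by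
  calc n ^ n = ∑ k ∈ range (n + 1), n.choose k * (r ^ k * (n - r) ^ (n - k)) := by
        rw [← Nat.add_sub_cancel' hr, add_pow, Nat.add_sub_cancel' hr]
        exact sum_congr rfl fun k _ ↦ by rw [Nat.cast_id]; ring
    _ ≤ ∑ _k ∈ range (n + 1), n.choose r * (r ^ r * (n - r) ^ (n - r)) :=
        sum_le_sum fun k _ ↦ choose_mul_pow_mul_pow_le hr k
    _ = _ := by rw [sum_const, card_range, smul_eq_mul]

end Nat

theorem inv_succ_le_choose_mul_pow_mul_pow {n r : ℕ} (hr : r ≤ n) (hn : 0 < n) :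
    ((n : ℝ) + 1)⁻¹
      ≤ n.choose r * (((r : ℝ) / n) ^ r * (1 - (r : ℝ) / n) ^ (n - r)) := by
  have hn' : (0 : ℝ) < n := by exact_mod_cast hn
  rw [one_sub_div hn'.ne', ← Nat.cast_sub hr, div_pow, div_pow, div_mul_div_comm, ← pow_add,
    Nat.add_sub_cancel' hr, ← mul_div_assoc, le_div_iff₀ (by positivity),
    inv_mul_le_iff₀ (by positivity)]
  exact_mod_cast Nat.pow_le_succ_mul_choose_mul_pow_mul_pow hr

theorem rpow_natCast_mul_entH_div {Q : ℝ} (hQ : 1 < Q) {n r : ℕ} (hrn : r < n) :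
    Q ^ ((n : ℝ) * entH Q ((r : ℝ) / n))
      = (Q - 1) ^ r / (((r : ℝ) / n) ^ r * (1 - (r : ℝ) / n) ^ (n - r)) := by
  rcases Nat.eq_zero_or_pos r with rfl | hr
  · simp [entH]
  have hn : (0 : ℝ) < n := by exact_mod_cast hr.trans hrn
  set ρ : ℝ := r / n with hρ
  have hρ₀ : 0 < ρ := by positivity
  have hρ₁ : 0 < 1 - ρ := by rw [sub_pos, div_lt_one hn]; exact_mod_cast hrn
  have hQ₀ : 0 < Q := by linarith
  have hr' : (n : ℝ) * ρ = r := by rw [hρ]; field_simp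
  have hnr : (n : ℝ) * (1 - ρ) = (n - r : ℕ) := by rw [Nat.cast_sub hrn.le, mul_one_sub, hr']
  have hexp : (n : ℝ) * entH Q ρ = Real.logb Q (Q - 1) * r + Real.logb Q ρ * (-r : ℝ)
      + Real.logb Q (1 - ρ) * (-(n - r : ℕ) : ℝ) := by
    rw [entH, ← hr', ← hnr]; ring
  rw [hexp, Real.rpow_add hQ₀, Real.rpow_add hQ₀, Real.rpow_mul hQ₀.le, Real.rpow_mul hQ₀.le,
    Real.rpow_mul hQ₀.le, Real.rpow_logb hQ₀ hQ.ne' (by linarith),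
    Real.rpow_logb hQ₀ hQ.ne' hρ₀, Real.rpow_logb hQ₀ hQ.ne' hρ₁, Real.rpow_neg hρ₀.le,
    Real.rpow_neg hρ₁.le]
  simp only [Real.rpow_natCast]
  field_simp

theorem pow_mul_one_sub_pow_pos {n r : ℕ} (hrn : r < n) :
    0 < ((r : ℝ) / n) ^ r * (1 - (r : ℝ) / n) ^ (n - r) := by
  have hn : (0 : ℝ) < n := by exact_mod_cast (Nat.zero_le r).trans_lt hrn
  refine mul_pos ?_ (pow_pos (by rw [sub_pos, div_lt_one hn]; exact_mod_cast hrn) _)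
  rw [div_pow]
  exact div_pos (by exact_mod_cast Nat.pow_self_pos) (by positivity)

section Alphabets

variable {n : ℕ} {q : Fin n → ℕ}

theorem two_le_qa (hn : 0 < n) (hq : ∀ i, 2 ≤ q i) : 2 ≤ qa q := by
  rw [qa, le_div_iff₀ (by exact_mod_cast hn)]
  calc (2 : ℝ) * n = ∑ _i : Fin n, (2 : ℝ) := by simp [mul_comm]
    _ ≤ ∑ i, (q i : ℝ) := sum_le_sum fun i _ ↦ by exact_mod_cast hq i

theorem one_le_prod_sub_one (hq : ∀ i, 2 ≤ q i) : 1 ≤ ∏ i, ((q i : ℝ) - 1) :=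
  Finset.one_le_prod fun i _ ↦ by
    have : (2 : ℝ) ≤ q i := by exact_mod_cast hq i
    linarith

theorem two_le_qmg (hq : ∀ i, 2 ≤ q i) : 2 ≤ qmg q := by
  have := Real.one_le_rpow (one_le_prod_sub_one hq) (inv_nonneg.2 (Nat.cast_nonneg n))
  rw [qmg]
  linarith

theorem qmg_sub_one_pow (hq : ∀ i, 2 ≤ q i) (r : ℕ) :
    (qmg q - 1) ^ r = (∏ i, ((q i : ℝ) - 1)) ^ ((r : ℝ) / n) := by
  rw [qmg, add_sub_cancel_right, ← Real.rpow_natCast,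
    ← Real.rpow_mul (zero_le_one.trans (one_le_prod_sub_one hq)), inv_mul_eq_div]

variable {β : Fin n → Type*} [∀ i, Fintype (β i)] [∀ i, DecidableEq (β i)]
  [∀ i, Zero (β i)]

theorem one_div_succ_mul_rpow_entH_qmg_le_card_hammingBall
    (hβ : ∀ i, Fintype.card (β i) = q i) (hq : ∀ i, 2 ≤ q i) {r : ℕ} (hrn : r < n) :
    1 / ((n : ℝ) + 1) * qmg q ^ ((n : ℝ) * entH (qmg q) ((r : ℝ) / n))
      ≤ #{x : ∀ i, β i | hammingNorm x ≤ r} := by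
  have hD := pow_mul_one_sub_pow_pos hrn
  have hq₁ : ∀ i, 1 ≤ q i := fun i ↦ (hq i).trans' one_le_two
  have hesymm := Real.choose_mul_prod_rpow_le_sum_powersetCard_prod univ
    (by simpa using hrn.le) fun i _ ↦ sub_nonneg.2 (Nat.one_le_cast.2 (hq₁ i))
  rw [card_univ, Fintype.card_fin] at hesymm
  rw [rpow_natCast_mul_entH_div ((two_le_qmg hq).trans_lt' one_lt_two) hrn, qmg_sub_one_pow hq]
  calc 1 / ((n : ℝ) + 1) * ((∏ i, ((q i : ℝ) - 1)) ^ ((r : ℝ) / n)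
        / (((r : ℝ) / n) ^ r * (1 - (r : ℝ) / n) ^ (n - r)))
      = 1 / ((n : ℝ) + 1) / (((r : ℝ) / n) ^ r * (1 - (r : ℝ) / n) ^ (n - r))
        * (∏ i, ((q i : ℝ) - 1)) ^ ((r : ℝ) / n) := by ring
    _ ≤ n.choose r * (∏ i, ((q i : ℝ) - 1)) ^ ((r : ℝ) / n) := by
        refine mul_le_mul_of_nonneg_right ?_
          (Real.rpow_nonneg (zero_le_one.trans (one_le_prod_sub_one hq)) _)
        rw [div_le_iff₀ hD, one_div]
        exact inv_succ_le_choose_mul_pow_mul_pow hrn.le (by omega)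
    _ ≤ ∑ S ∈ powersetCard r univ, ∏ i ∈ S, ((q i : ℝ) - 1) := hesymm
    _ = #{x : ∀ i, β i | hammingNorm x = r} := by
        rw [card_hammingNorm_eq]
        push_cast [hβ, Nat.cast_sub (hq₁ _)]
        rfl
    _ ≤ #{x : ∀ i, β i | hammingNorm x ≤ r} := by
        gcongr with x
        exact le_of_eq

theorem card_hammingBall_mul_pow_le (hβ : ∀ i, Fintype.card (β i) = q i) (hn : 0 < n)
    (r : ℕ) {t : ℝ} (ht₀ : 0 ≤ t) (ht₁ : t ≤ 1) :
    (#{x : ∀ i, β i | hammingNorm x ≤ r} : ℝ) * t ^ r ≤ (1 + (qa q - 1) * t) ^ n := by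
  have hn' : (n : ℝ) ≠ 0 := by exact_mod_cast hn.ne'
  have hmean : (∑ i, (1 + ((q i : ℝ) - 1) * t)) / n = 1 + (qa q - 1) * t := by
    simp only [sum_add_distrib, ← sum_mul, sum_sub_distrib, sum_const, card_univ,
      Fintype.card_fin, nsmul_eq_mul, mul_one, qa]
    field_simp
  calc (#{x : ∀ i, β i | hammingNorm x ≤ r} : ℝ) * t ^ r
      ≤ ∏ i, (1 + ((q i : ℝ) - 1) * t) := by
        simpa only [hβ] using card_hammingNorm_le_mul_pow_le (β := β) r ht₀ ht₁
    _ ≤ ((∑ i, (1 + ((q i : ℝ) - 1) * t)) / #(univ : Finset (Fin n)))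
          ^ #(univ : Finset (Fin n)) :=
        Real.prod_le_mean_pow univ fun i _ ↦ by
          have : (1 : ℝ) ≤ q i := by exact_mod_cast (hβ i).symm.trans_ge Fintype.card_pos
          nlinarith
    _ = (1 + (qa q - 1) * t) ^ n := by rw [card_univ, Fintype.card_fin, hmean]

theorem card_hammingBall_le_rpow_entH_qa (hβ : ∀ i, Fintype.card (β i) = q i)
    (hq : ∀ i, 2 ≤ q i) (hn : 0 < n) {r : ℕ} (hr : (r : ℝ) ≤ (1 - 1 / qa q) * n)
    (hrn : r < n) :
    (#{x : ∀ i, β i | hammingNorm x ≤ r} : ℝ)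
      ≤ qa q ^ ((n : ℝ) * entH (qa q) ((r : ℝ) / n)) := by
  have hqa := two_le_qa hn hq
  have hqa₁ : 0 < qa q - 1 := by linarith
  have hn' : (0 : ℝ) < n := by exact_mod_cast hn
  set ρ : ℝ := r / n with hρ
  have hρ₁ : 0 < 1 - ρ := by rw [sub_pos, hρ, div_lt_one hn']; exact_mod_cast hrn
  set t : ℝ := ρ / ((1 - ρ) * (qa q - 1)) with ht
  have ht₁ : t ≤ 1 := by
    have hρ_le : ρ ≤ 1 - 1 / qa q := by rw [hρ, div_le_iff₀ hn']; exact hr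
    have : (1 - ρ) * (qa q - 1) - ρ = qa q * (1 - 1 / qa q - ρ) := by field_simp; ring
    rw [ht, div_le_one (by positivity)]
    nlinarith
  have hbase : 1 + (qa q - 1) * t = (1 - ρ)⁻¹ := by
    rw [ht]
    field_simp
    ring
  have hchernoff := card_hammingBall_mul_pow_le hβ hn r (by positivity) ht₁
  have hweight : ρ ^ r * (1 - ρ) ^ (n - r) = t ^ r * (1 - ρ) ^ n * (qa q - 1) ^ r := by
    have : t * (qa q - 1) * (1 - ρ) = ρ := by
      rw [ht]
      field_simp
    calc ρ ^ r * (1 - ρ) ^ (n - r) = (t * (qa q - 1) * (1 - ρ)) ^ r * (1 - ρ) ^ (n - r) := by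
          rw [this]
      _ = t ^ r * ((1 - ρ) ^ r * (1 - ρ) ^ (n - r)) * (qa q - 1) ^ r := by
          rw [mul_pow, mul_pow]
          ring
      _ = _ := by rw [← pow_add, Nat.add_sub_cancel' hrn.le]
  rw [rpow_natCast_mul_entH_div (one_lt_two.trans_le hqa) hrn,
    le_div_iff₀ (pow_mul_one_sub_pow_pos hrn), ← hρ, hweight]
  calc _ = (#{x : ∀ i, β i | hammingNorm x ≤ r} : ℝ) * t ^ r * (1 - ρ) ^ n * (qa q - 1) ^ r :=
        by ring
    _ ≤ ((1 - ρ)⁻¹) ^ n * (1 - ρ) ^ n * (qa q - 1) ^ r := by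
        rw [← hbase]
        gcongr
    _ = (qa q - 1) ^ r := by rw [inv_pow, inv_mul_cancel₀ (pow_ne_zero _ hρ₁.ne'), one_mul]

end Alphabets

/-- For `0 ≤ r ≤ (1 - 1/q̂_a) n`, the Hamming ball `B_r(0)` satisfies
`(1/(n+1)) q̂_mg^{n H_{q̂_mg}(r/n)} ≤ |B_r(0)| ≤ q̂_a^{n H_{q̂_a}(r/n)}`. -/
theorem stmt7 (n : ℕ) (hn : 1 ≤ n) (q : Fin n → ℕ) (hq : ∀ i, 2 ≤ q i)
    (r : ℕ) (hr : (r : ℝ) ≤ (1 - 1 / qa q) * n) :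
    (1 / ((n : ℝ) + 1)) * qmg q ^ ((n : ℝ) * entH (qmg q) ((r : ℝ) / n))
        ≤ (Nat.card {x : ∀ i, ZMod (q i) // mwt x ≤ r} : ℝ)
      ∧ (Nat.card {x : ∀ i, ZMod (q i) // mwt x ≤ r} : ℝ)
        ≤ qa q ^ ((n : ℝ) * entH (qa q) ((r : ℝ) / n)) := by
  have : ∀ i, NeZero (q i) := fun i ↦ ⟨by have := hq i; omega⟩
  have hrn : r < n := by
    have : 0 < 1 / qa q := by have := two_le_qa hn hq; positivity
    have : (r : ℝ) < n := hr.trans_lt (by nlinarith [(show (1 : ℝ) ≤ n by exact_mod_cast hn)])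
    exact_mod_cast this
  have hball : (Nat.card {x : ∀ i, ZMod (q i) // mwt x ≤ r} : ℝ)
      = #{x : ∀ i, ZMod (q i) | hammingNorm x ≤ r} := by
    rw [Nat.card_eq_fintype_card, Fintype.card_subtype]
    rfl
  rw [hball]
  exact ⟨one_div_succ_mul_rpow_entH_qmg_le_card_hammingBall (fun i ↦ ZMod.card _) hq hrn,
    card_hammingBall_le_rpow_entH_qa (fun i ↦ ZMod.card _) hq hn hr hrn⟩
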